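/- arXiv:2104.02985 — 3 statements merged into one kernel-verified Lean document; each statement's English description precedes it below -/
import Mathlib

section
/- Let C be a coalgebra over ℂ and ψ ∈ C'. For every c ∈ C, the series exp_C(ψ)(c) = Σ_{n=0}^∞ ψ^{*n}(c)/n! converges absolutely in ℂ, where ψ^{*n} denotes the n-fold convolution power of ψ (with ψ^{*0} = δ the counit). -/
/-!
Expand `Δ c = ∑ᵢ bᵢ ⊗ wᵢ` in a basis `(bᵢ)` of `C`; only finitely many `wᵢ` are nonzero.
Coassociativity gives `Δ wₖ = ∑ᵢ rₖᵢ ⊗ wᵢ`, where `rₖᵢ` is the `k`-th left coordinate of `Δ bᵢ`,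
so the `wᵢ` span a finite-dimensional right coideal, and counitality gives `c = ∑ᵢ ε(bᵢ) wᵢ`.
On that coideal `ψ^{*(n+1)}(wₖ) = ∑ᵢ ψ(rₖᵢ) ψ^{*n}(wᵢ)` is a linear recursion with a fixed finite
matrix, hence `‖ψ^{*n}(c)‖ ≤ K Qⁿ` and the series is dominated by `K e^Q`.
-/

open TensorProduct

/-- Convolution of linear functionals on a coalgebra: `f * g = (f ⊗ g) ∘ Δ`. -/
noncomputable def conv {C : Type*} [AddCommGroup C] [Module ℂ C] [Coalgebra ℂ C]
    (f g : C →ₗ[ℂ] ℂ) : C →ₗ[ℂ] ℂ :=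
  (LinearMap.mul' ℂ ℂ).comp ((TensorProduct.map f g).comp Coalgebra.comul)

/-- Convolution powers, with `ψ^{*0} = δ` the counit. -/
noncomputable def convPow {C : Type*} [AddCommGroup C] [Module ℂ C] [Coalgebra ℂ C]
    (ψ : C →ₗ[ℂ] ℂ) : ℕ → (C →ₗ[ℂ] ℂ)
  | 0 => Coalgebra.counit
  | n + 1 => conv ψ (convPow ψ n)

open Coalgebra

namespace TensorProduct

variable {R M N P ι : Type*} [CommSemiring R] [AddCommMonoid M] [Module R M]
  [AddCommMonoid N] [Module R N] [AddCommMonoid P] [Module R P] [DecidableEq ι]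
  (b : Module.Basis ι R M)

lemma equivFinsuppOfBasisLeft_lTensor_apply (f : N →ₗ[R] P) (t : M ⊗[R] N) (i : ι) :
    equivFinsuppOfBasisLeft b (f.lTensor M t) i = f (equivFinsuppOfBasisLeft b t i) := by
  induction t with
  | zero => simp
  | tmul m n => simp
  | add x y hx hy => simp [hx, hy]

lemma equivFinsuppOfBasisLeft_assoc_tmul_apply (t : M ⊗[R] N) (p : P) (i : ι) :
    equivFinsuppOfBasisLeft b (TensorProduct.assoc R M N P (t ⊗ₜ p)) i =
      equivFinsuppOfBasisLeft b t i ⊗ₜ p := by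
  induction t with
  | zero => simp
  | tmul m n => simp [smul_tmul']
  | add x y hx hy => simp [add_tmul, hx, hy]

end TensorProduct

namespace Coalgebra.Repr

variable {R C ι : Type*} [CommSemiring R] [AddCommMonoid C] [Module R C] [Coalgebra R C]
  [DecidableEq ι] (b : Module.Basis ι R C)

noncomputable def ofBasis (a : C) : Coalgebra.Repr R a ι where
  index := (equivFinsuppOfBasisLeft b (comul a)).support
  left := b
  right := equivFinsuppOfBasisLeft b (comul a)
  eq := by
    conv_rhs => rw [← (equivFinsuppOfBasisLeft b).symm_apply_apply (comul a)]
    rw [equivFinsuppOfBasisLeft_symm_apply, Finsupp.sum]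

lemma comul_ofBasis_right (a : C) (k : ι) :
    comul (R := R) ((ofBasis b a).right k) =
      ∑ i ∈ (ofBasis b a).index, (ofBasis b (b i)).right k ⊗ₜ (ofBasis b a).right i := by
  have h := congr(equivFinsuppOfBasisLeft b $(coassoc_apply (R := R) a) k)
  rw [equivFinsuppOfBasisLeft_lTensor_apply] at h
  refine h.symm.trans ?_
  conv_lhs => rw [← (ofBasis b a).eq]
  simp only [map_sum, LinearMap.rTensor_tmul, Finsupp.coe_finsetSum, Finset.sum_apply,
    equivFinsuppOfBasisLeft_assoc_tmul_apply]
  rfl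

end Coalgebra.Repr

section Convolution

variable {C : Type*} [AddCommGroup C] [Module ℂ C] [Coalgebra ℂ C]

lemma Coalgebra.Repr.conv_apply {a : C} {ι : Type*} (𝓡 : Coalgebra.Repr ℂ a ι)
    (f g : C →ₗ[ℂ] ℂ) : conv f g a = ∑ i ∈ 𝓡.index, f (𝓡.left i) * g (𝓡.right i) := by
  simp [conv, ← 𝓡.eq]

lemma sum_norm_convPow_le {ι : Type*} (ψ : C →ₗ[ℂ] ℂ) (s : Finset ι) (w : ι → C)
    (r : ι → ι → C) (hw : ∀ k ∈ s, comul (R := ℂ) (w k) = ∑ i ∈ s, r k i ⊗ₜ w i) (n : ℕ) :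
    ∑ k ∈ s, ‖convPow ψ n (w k)‖ ≤
      (∑ k ∈ s, ‖counit (R := ℂ) (w k)‖) * (∑ k ∈ s, ∑ i ∈ s, ‖ψ (r k i)‖) ^ n := by
  induction n with
  | zero => simp [convPow]
  | succ n ih =>
    set Q := ∑ k ∈ s, ∑ i ∈ s, ‖ψ (r k i)‖
    set M := ∑ i ∈ s, ‖convPow ψ n (w i)‖
    have hstep : ∀ k ∈ s, ‖convPow ψ (n + 1) (w k)‖ ≤ (∑ i ∈ s, ‖ψ (r k i)‖) * M := by
      intro k hk
      rw [convPow, (Coalgebra.Repr.mk s (r k) w (hw k hk).symm).conv_apply, Finset.sum_mul]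
      refine (norm_sum_le _ _).trans (Finset.sum_le_sum fun i hi => ?_)
      rw [norm_mul]
      exact mul_le_mul_of_nonneg_left
        (Finset.single_le_sum (fun j _ => norm_nonneg (convPow ψ n (w j))) hi) (norm_nonneg _)
    calc ∑ k ∈ s, ‖convPow ψ (n + 1) (w k)‖
        ≤ ∑ k ∈ s, (∑ i ∈ s, ‖ψ (r k i)‖) * M := Finset.sum_le_sum hstep
      _ = Q * M := (Finset.sum_mul ..).symm
      _ ≤ Q * ((∑ k ∈ s, ‖counit (R := ℂ) (w k)‖) * Q ^ n) := by gcongr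
      _ = _ := by ring

lemma exists_norm_convPow_le (ψ : C →ₗ[ℂ] ℂ) (c : C) :
    ∃ K Q : ℝ, ∀ n, ‖convPow ψ n c‖ ≤ K * Q ^ n := by
  classical
  let b := Module.Basis.ofVectorSpace ℂ C
  let 𝓡 := Coalgebra.Repr.ofBasis b c
  set T := ∑ i ∈ 𝓡.index, ‖counit (R := ℂ) (𝓡.left i)‖
  set K := ∑ i ∈ 𝓡.index, ‖counit (R := ℂ) (𝓡.right i)‖
  set Q := ∑ k ∈ 𝓡.index, ∑ i ∈ 𝓡.index, ‖ψ ((Coalgebra.Repr.ofBasis b (b i)).right k)‖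
  refine ⟨T * K, Q, fun n => ?_⟩
  have hright : ∀ i ∈ 𝓡.index, ‖convPow ψ n (𝓡.right i)‖ ≤ K * Q ^ n := fun i hi =>
    (Finset.single_le_sum (fun j _ => norm_nonneg (convPow ψ n (𝓡.right j))) hi).trans
      (sum_norm_convPow_le ψ 𝓡.index 𝓡.right _
        (fun k _ => Coalgebra.Repr.comul_ofBasis_right b c k) n)
  have hcounit : convPow ψ n c =
      ∑ i ∈ 𝓡.index, counit (R := ℂ) (𝓡.left i) * convPow ψ n (𝓡.right i) := by
    conv_lhs => rw [← sum_counit_smul 𝓡]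
    simp
  calc ‖convPow ψ n c‖
      ≤ ∑ i ∈ 𝓡.index, ‖counit (R := ℂ) (𝓡.left i)‖ * ‖convPow ψ n (𝓡.right i)‖ := by
        rw [hcounit]
        exact (norm_sum_le _ _).trans_eq (by simp only [norm_mul])
    _ ≤ ∑ i ∈ 𝓡.index, ‖counit (R := ℂ) (𝓡.left i)‖ * (K * Q ^ n) := by
        gcongr with i hi
        exact hright i hi
    _ = T * K * Q ^ n := by rw [← Finset.sum_mul, mul_assoc]

end Convolution

/-- For every `c`, the exponential series `Σ ψ^{*n}(c)/n!` converges absolutely in `ℂ`. -/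
theorem conv_exp_summable {C : Type*} [AddCommGroup C] [Module ℂ C] [Coalgebra ℂ C]
    (ψ : C →ₗ[ℂ] ℂ) (c : C) :
    Summable (fun n : ℕ => ‖convPow ψ n c‖ / (n.factorial : ℝ)) := by
  obtain ⟨K, Q, hKQ⟩ := exists_norm_convPow_le ψ c
  refine ((Real.summable_pow_div_factorial Q).mul_left K).of_nonneg_of_le (fun n => by positivity)
    fun n => ?_
  rw [← mul_div_assoc]
  exact div_le_div_of_nonneg_right (hKQ n) (by positivity)
end

section
/- In a unital Banach algebra A, if x ∈ A and r_n ∈ A satisfy ‖r_n‖ ≤ K/n² for all n and some constant K, then (1 + x/n + r_n)^n → exp(x) in norm as n → ∞. -/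
/-!
Put `a n = 1 + x/n + r n` and `b n = exp (x/n)`, so that `b n ^ n = exp x` and, by the quadratic
bound on the tail of the exponential series, `‖a n - b n‖ = O(1/n²)`. Both `‖a n - 1‖` and
`‖b n - 1‖` are `O(1/n)`, so all powers `a n ^ k`, `b n ^ k` with `k ≤ n` stay bounded, and the
telescoping identity `a ^ n - b ^ n = ∑ a ^ k (a - b) b ^ (n - 1 - k)` gives
`‖a n ^ n - b n ^ n‖ = O(1/n)`.
-/

open Filter Finset

theorem pow_sub_pow_eq_sum_pow_mul_sub_mul_pow {R : Type*} [Ring R] (a b : R) (n : ℕ) :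
    a ^ n - b ^ n = ∑ k ∈ range n, a ^ k * (a - b) * b ^ (n - 1 - k) := by
  induction n with
  | zero => simp
  | succ n ih =>
    have hsub : ∀ k, n + 1 - 1 - (k + 1) = n - 1 - k := fun k => by omega
    rw [sum_range_succ']
    simp only [hsub, pow_succ' a, mul_assoc a, ← mul_sum]
    rw [← ih, pow_succ' b, Nat.add_sub_cancel, Nat.sub_zero]
    noncomm_ring

section NormedRing

variable {A : Type*} [NormedRing A]

/- Bounding `‖a ^ k‖` by `‖a‖ ^ k` would be useless when `‖1‖ > 1`; expanding
`a ^ (k + 1) = a ^ k + a ^ k * (a - 1)` only loses the factor `1 + ‖a - 1‖` per step. -/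
theorem norm_pow_le_norm_one_mul_one_add_pow (a : A) (k : ℕ) :
    ‖a ^ k‖ ≤ ‖(1 : A)‖ * (1 + ‖a - 1‖) ^ k := by
  induction k with
  | zero => simp
  | succ k ih =>
    calc ‖a ^ (k + 1)‖ = ‖a ^ k + a ^ k * (a - 1)‖ := by
          rw [mul_sub, mul_one, add_sub_cancel, pow_succ]
      _ ≤ ‖a ^ k‖ * (1 + ‖a - 1‖) := by
          rw [mul_one_add]; exact norm_add_le_of_le le_rfl (norm_mul_le _ _)
      _ ≤ ‖(1 : A)‖ * (1 + ‖a - 1‖) ^ (k + 1) := by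
          rw [pow_succ, ← mul_assoc]; gcongr

theorem norm_pow_le_of_norm_sub_one_le {a : A} {c : ℝ} {n k : ℕ} (hn : 0 < n) (hk : k ≤ n)
    (ha : ‖a - 1‖ ≤ c / n) : ‖a ^ k‖ ≤ ‖(1 : A)‖ * Real.exp c := by
  have hnc : n * ‖a - 1‖ ≤ c := by rwa [le_div_iff₀' (by positivity)] at ha
  calc ‖a ^ k‖ ≤ ‖(1 : A)‖ * (1 + ‖a - 1‖) ^ k := norm_pow_le_norm_one_mul_one_add_pow a k
    _ ≤ ‖(1 : A)‖ * Real.exp (k * ‖a - 1‖) := by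
        rw [Real.exp_nat_mul]; gcongr; linarith [Real.add_one_le_exp ‖a - 1‖]
    _ ≤ ‖(1 : A)‖ * Real.exp c := by
        gcongr
        exact (mul_le_mul_of_nonneg_right (by exact_mod_cast hk) (norm_nonneg _)).trans hnc

theorem norm_pow_sub_pow_le {a b : A} {n : ℕ} {C : ℝ} (ha : ∀ k < n, ‖a ^ k‖ ≤ C)
    (hb : ∀ k < n, ‖b ^ k‖ ≤ C) : ‖a ^ n - b ^ n‖ ≤ n * (C ^ 2 * ‖a - b‖) := by
  rw [pow_sub_pow_eq_sum_pow_mul_sub_mul_pow]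
  refine (norm_sum_le _ _).trans <| (sum_le_card_nsmul (range n) _ (C ^ 2 * ‖a - b‖)
    fun k hk => ?_).trans_eq (by rw [card_range, nsmul_eq_mul])
  have hk : k < n := mem_range.mp hk
  have hC : 0 ≤ C := (norm_nonneg _).trans (ha k hk)
  calc ‖a ^ k * (a - b) * b ^ (n - 1 - k)‖ ≤ ‖a ^ k‖ * ‖a - b‖ * ‖b ^ (n - 1 - k)‖ :=
        norm_mul₃_le
    _ ≤ C * ‖a - b‖ * C := by gcongr; exacts [ha k hk, hb _ (by omega)]
    _ = C ^ 2 * ‖a - b‖ := by ring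

theorem norm_pow_sub_pow_le_of_norm_sub_one_le {a b : A} {n : ℕ} (hn : 0 < n) {c d : ℝ}
    (ha : ‖a - 1‖ ≤ c / n) (hab : ‖a - b‖ ≤ d / n ^ 2) :
    ‖a ^ n - b ^ n‖ ≤ (‖(1 : A)‖ * Real.exp (c + d)) ^ 2 * d / n := by
  have hn1 : (1 : ℝ) ≤ n := by exact_mod_cast hn
  have hd : 0 ≤ d := by
    simpa [div_nonneg_iff, hn.ne'] using (norm_nonneg _).trans hab
  have hd' : d / n ^ 2 ≤ d / n := by gcongr; nlinarith
  have hb : ‖b - 1‖ ≤ (c + d) / n :=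
    calc ‖b - 1‖ = ‖(a - 1) - (a - b)‖ := by rw [sub_sub_sub_cancel_left]
      _ ≤ ‖a - 1‖ + ‖a - b‖ := norm_sub_le _ _
      _ ≤ (c + d) / n := by rw [add_div]; linarith
  have ha' : ‖a - 1‖ ≤ (c + d) / n := ha.trans (by gcongr; linarith)
  calc ‖a ^ n - b ^ n‖ ≤ n * ((‖(1 : A)‖ * Real.exp (c + d)) ^ 2 * ‖a - b‖) :=
        norm_pow_sub_pow_le (fun k hk => norm_pow_le_of_norm_sub_one_le hn hk.le ha')
          (fun k hk => norm_pow_le_of_norm_sub_one_le hn hk.le hb)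
    _ ≤ n * ((‖(1 : A)‖ * Real.exp (c + d)) ^ 2 * (d / n ^ 2)) := by gcongr
    _ = (‖(1 : A)‖ * Real.exp (c + d)) ^ 2 * d / n := by field_simp

end NormedRing

open NormedSpace in
theorem norm_exp_sub_one_sub_le {A : Type*} [NormedRing A] [NormedAlgebra ℚ A]
    [CompleteSpace A] (y : A) : ‖exp y - 1 - y‖ ≤ ‖y‖ ^ 2 * Real.exp ‖y‖ := by
  have hs := norm_expSeries_summable' (𝕂 := ℚ) y
  have htail : exp y - 1 - y = ∑' k : ℕ, ((k + 2).factorial⁻¹ : ℚ) • y ^ (k + 2) := by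
    rw [congrFun (exp_eq_tsum ℚ) y, ← hs.of_norm.sum_add_tsum_nat_add 2]
    simp only [sum_range_succ, range_one, sum_singleton, Nat.factorial_zero, Nat.factorial_one,
      Nat.cast_one, inv_one, pow_zero, pow_one, one_smul]
    abel
  have hterm : ∀ k : ℕ, ‖((k + 2).factorial⁻¹ : ℚ) • y ^ (k + 2)‖ ≤
      ‖y‖ ^ 2 * (‖y‖ ^ k / k.factorial) := fun k => by
    have hfac : (k.factorial : ℝ) ≤ (k + 2).factorial := by
      exact_mod_cast Nat.factorial_le (by omega)
    calc ‖((k + 2).factorial⁻¹ : ℚ) • y ^ (k + 2)‖ ≤ ‖y‖ ^ (k + 2) / (k + 2).factorial := by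
          rw [norm_smul, norm_inv, ← Rat.norm_cast_real, Rat.cast_natCast, RCLike.norm_natCast,
            inv_mul_eq_div]
          gcongr
          exact norm_pow_le' y (by omega)
      _ ≤ ‖y‖ ^ (k + 2) / k.factorial := by gcongr
      _ = ‖y‖ ^ 2 * (‖y‖ ^ k / k.factorial) := by ring
  have hs2 := (summable_nat_add_iff 2).2 hs
  rw [htail]
  refine (norm_tsum_le_tsum_norm hs2).trans ?_
  refine (hs2.tsum_le_tsum hterm ((Real.summable_pow_div_factorial ‖y‖).mul_left _)).trans_eq ?_
  rw [tsum_mul_left, Real.exp_eq_exp_ℝ, exp_eq_tsum_div]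

section RCLike

open NormedSpace

variable {𝕜 A : Type*} [RCLike 𝕜] [NormedRing A] [NormedAlgebra 𝕜 A]

theorem norm_inv_natCast_smul (x : A) (n : ℕ) : ‖(n : 𝕜)⁻¹ • x‖ = ‖x‖ / n := by
  simp [norm_smul, div_eq_inv_mul]

theorem norm_one_add_inv_smul_add_sub_one_le (x r : A) {K : ℝ} (hK : 0 ≤ K) {n : ℕ}
    (hn : 0 < n) (hr : ‖r‖ ≤ K / n ^ 2) : ‖1 + (n : 𝕜)⁻¹ • x + r - 1‖ ≤ (‖x‖ + K) / n := by
  have hn1 : (1 : ℝ) ≤ n := by exact_mod_cast hn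
  calc ‖1 + (n : 𝕜)⁻¹ • x + r - 1‖ ≤ ‖(n : 𝕜)⁻¹ • x‖ + ‖r‖ := by
        rw [add_assoc, add_sub_cancel_left]; exact norm_add_le _ _
    _ ≤ ‖x‖ / n + K / n := by
        rw [norm_inv_natCast_smul]; gcongr
        exact hr.trans (by gcongr; nlinarith)
    _ = (‖x‖ + K) / n := by rw [add_div]

variable [CompleteSpace A]

theorem norm_one_add_inv_smul_add_sub_exp_le (x r : A) {K : ℝ} {n : ℕ} (hn : 0 < n)
    (hr : ‖r‖ ≤ K / n ^ 2) :
    ‖1 + (n : 𝕜)⁻¹ • x + r - exp ((n : 𝕜)⁻¹ • x)‖ ≤ (‖x‖ ^ 2 * Real.exp ‖x‖ + K) / n ^ 2 := by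
  let _ : NormedAlgebra ℚ A := .restrictScalars ℚ 𝕜 A
  set y := (n : 𝕜)⁻¹ • x
  have hn1 : (1 : ℝ) ≤ n := by exact_mod_cast hn
  calc ‖1 + y + r - exp y‖ = ‖r - (exp y - 1 - y)‖ := by congr 1; abel
    _ ≤ K / n ^ 2 + ‖y‖ ^ 2 * Real.exp ‖y‖ := norm_sub_le_of_le hr (norm_exp_sub_one_sub_le y)
    _ ≤ K / n ^ 2 + ‖x‖ ^ 2 * Real.exp ‖x‖ / n ^ 2 := by
        rw [norm_inv_natCast_smul, div_pow, div_mul_eq_mul_div]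
        gcongr
        exact div_le_self (norm_nonneg x) hn1
    _ = (‖x‖ ^ 2 * Real.exp ‖x‖ + K) / n ^ 2 := by rw [← add_div, add_comm]

theorem exp_inv_natCast_smul_pow (x : A) {n : ℕ} (hn : n ≠ 0) :
    exp ((n : 𝕜)⁻¹ • x) ^ n = exp x := by
  let _ : NormedAlgebra ℚ A := .restrictScalars ℚ 𝕜 A
  rw [← exp_nsmul, ← Nat.cast_smul_eq_nsmul 𝕜, smul_inv_smul₀ (Nat.cast_ne_zero.mpr hn)]

end RCLike

/-- In a unital Banach algebra, if `‖r_n‖ ≤ K/n²`, then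
`(1 + x/n + r_n)^n → exp(x)`. -/
theorem lie_trotter_banach {A : Type*} [NormedRing A] [NormedAlgebra ℂ A]
    [CompleteSpace A] (x : A) (r : ℕ → A) (K : ℝ)
    (hr : ∀ n : ℕ, ‖r n‖ ≤ K / (n : ℝ) ^ 2) :
    Tendsto (fun n : ℕ => (1 + (n : ℂ)⁻¹ • x + r n) ^ n) atTop
      (nhds (NormedSpace.exp x)) := by
  have hK : 0 ≤ K := (norm_nonneg _).trans (by simpa using hr 1)
  set c := ‖x‖ + K
  set d := ‖x‖ ^ 2 * Real.exp ‖x‖ + K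
  rw [tendsto_iff_norm_sub_tendsto_zero]
  refine squeeze_zero' (.of_forall fun n => norm_nonneg _) ?_
    (tendsto_const_div_atTop_nhds_zero_nat ((‖(1 : A)‖ * Real.exp (c + d)) ^ 2 * d))
  filter_upwards [eventually_gt_atTop 0] with n hn
  rw [← exp_inv_natCast_smul_pow (𝕜 := ℂ) x hn.ne']
  exact norm_pow_sub_pow_le_of_norm_sub_one_le hn
    (norm_one_add_inv_smul_add_sub_one_le x (r n) hK hn (hr n))
    (norm_one_add_inv_smul_add_sub_exp_le x (r n) hn (hr n))
end

section
/- Let B be a dual semigroup with comultiplication Λ : B → B ⊔ B, and let ⊙ be an associative universal product for linear functionals. Then the convolution φ₁ ⋆ φ₂ := (φ₁ ⊙ φ₂)∘Λ makes the set of linear functionals B → ℂ a monoid with identity element the zero functional 0. -/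
/-- A bundled non-unital algebra over `ℂ`. -/
structure AlgC where
  X : Type
  [ring : NonUnitalRing X]
  [mod : Module ℂ X]
  [sc : SMulCommClass ℂ X X]
  [st : IsScalarTower ℂ X X]

attribute [instance] AlgC.ring AlgC.mod AlgC.sc AlgC.st

/-- Morphisms of non-unital `ℂ`-algebras. -/
abbrev AlgC.Hom (A B : AlgC) := A.X →ₙₐ[ℂ] B.X

/-- Free product (coproduct) data for a pair of non-unital algebras. -/
structure FreeProd (A B : AlgC) where
  P : AlgC
  ι₁ : AlgC.Hom A P
  ι₂ : AlgC.Hom B P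
  up : ∀ (C : AlgC) (f : AlgC.Hom A C) (g : AlgC.Hom B C),
    ∃! h : AlgC.Hom P C, h.comp ι₁ = f ∧ h.comp ι₂ = g

/-- The copairing `f ⊔ g : A ⊔ B → C`. -/
noncomputable def FreeProd.lift {A B : AlgC} (d : FreeProd A B) {C : AlgC}
    (f : AlgC.Hom A C) (g : AlgC.Hom B C) : AlgC.Hom d.P C :=
  (d.up C f g).exists.choose

/-- The functorial map `j₁ ⊔ j₂ : A ⊔ B → A' ⊔ B'`. -/
noncomputable def fpMap (fp : ∀ A B : AlgC, FreeProd A B) {A B A' B' : AlgC}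
    (j₁ : AlgC.Hom A A') (j₂ : AlgC.Hom B B') :
    AlgC.Hom (fp A B).P (fp A' B').P :=
  (fp A B).lift ((fp A' B').ι₁.comp j₁) ((fp A' B').ι₂.comp j₂)

/-- The canonical associator `(A ⊔ B) ⊔ C → A ⊔ (B ⊔ C)`. -/
noncomputable def fpAssoc (fp : ∀ A B : AlgC, FreeProd A B) (A B C : AlgC) :
    AlgC.Hom (fp (fp A B).P C).P (fp A (fp B C).P).P :=
  (fp (fp A B).P C).lift
    ((fp A B).lift ((fp A (fp B C).P).ι₁)
      (((fp A (fp B C).P).ι₂).comp ((fp B C).ι₁)))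
    (((fp A (fp B C).P).ι₂).comp ((fp B C).ι₂))

/-- The zero algebra `{0}`. -/
def zeroAlg : AlgC := ⟨PUnit⟩

/-!
Universality along `Λ ⊔ id` and `id ⊔ Λ` writes `(φ₁ ⋆ φ₂) ⋆ φ₃` as `(φ₁ ⊙ φ₂) ⊙ φ₃` composed
with `(Λ ⊔ id) ∘ Λ`, and `φ₁ ⋆ (φ₂ ⋆ φ₃)` as `φ₁ ⊙ (φ₂ ⊙ φ₃)` composed with `(id ⊔ Λ) ∘ Λ`;
associativity of `⊙` and coassociativity of `Λ` identify the two. For the unit, the zero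
functional on `B₀` factors through the zero algebra, so universality along `0 ⊔ id` and the unit
condition give `(0 ⊙ φ) ∘ Λ = φ ∘ [0, id] ∘ (0 ⊔ id) ∘ Λ = φ ∘ [0, id] ∘ Λ`, which is `φ` by the
counit property.
-/

theorem NonUnitalAlgHom.comp_assoc {R A B C D : Type*} [Monoid R]
    [NonUnitalNonAssocSemiring A] [DistribMulAction R A]
    [NonUnitalNonAssocSemiring B] [DistribMulAction R B]
    [NonUnitalNonAssocSemiring C] [DistribMulAction R C]
    [NonUnitalNonAssocSemiring D] [DistribMulAction R D]
    (h : C →ₙₐ[R] D) (g : B →ₙₐ[R] C) (f : A →ₙₐ[R] B) :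
    (h.comp g).comp f = h.comp (g.comp f) :=
  rfl

theorem NonUnitalAlgHom.zero_comp {R A B C : Type*} [Monoid R]
    [NonUnitalNonAssocSemiring A] [DistribMulAction R A]
    [NonUnitalNonAssocSemiring B] [DistribMulAction R B]
    [NonUnitalNonAssocSemiring C] [DistribMulAction R C]
    (f : A →ₙₐ[R] B) : (0 : B →ₙₐ[R] C).comp f = 0 :=
  rfl

theorem NonUnitalAlgHom.linearMap_id {R A : Type*} [CommSemiring R]
    [NonUnitalNonAssocSemiring A] [Module R A] :
    LinearMapClass.linearMap (NonUnitalAlgHom.id R A) = LinearMap.id :=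
  rfl

namespace FreeProd

variable {A B : AlgC}

theorem lift_comp_ι {C : AlgC} (d : FreeProd A B) (f : AlgC.Hom A C) (g : AlgC.Hom B C) :
    (d.lift f g).comp d.ι₁ = f ∧ (d.lift f g).comp d.ι₂ = g :=
  (d.up C f g).exists.choose_spec

theorem hom_ext {C : AlgC} (d : FreeProd A B) {h h' : AlgC.Hom d.P C}
    (h₁ : h.comp d.ι₁ = h'.comp d.ι₁) (h₂ : h.comp d.ι₂ = h'.comp d.ι₂) : h = h' :=
  (d.up C _ _).unique ⟨h₁, h₂⟩ ⟨rfl, rfl⟩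

theorem lift_comp_fpMap (fp : ∀ A B : AlgC, FreeProd A B) {A' B' C : AlgC}
    (f : AlgC.Hom A' C) (g : AlgC.Hom B' C) (j₁ : AlgC.Hom A A') (j₂ : AlgC.Hom B B') :
    ((fp A' B').lift f g).comp (fpMap fp j₁ j₂) = (fp A B).lift (f.comp j₁) (g.comp j₂) := by
  obtain ⟨hf, hg⟩ := (fp A' B').lift_comp_ι f g
  obtain ⟨hfj, hgj⟩ := (fp A B).lift_comp_ι (f.comp j₁) (g.comp j₂)
  obtain ⟨hι₁, hι₂⟩ := (fp A B).lift_comp_ι ((fp A' B').ι₁.comp j₁) ((fp A' B').ι₂.comp j₂)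
  apply (fp A B).hom_ext
  · rw [hfj, NonUnitalAlgHom.comp_assoc, fpMap, hι₁, ← NonUnitalAlgHom.comp_assoc, hf]
  · rw [hgj, NonUnitalAlgHom.comp_assoc, fpMap, hι₂, ← NonUnitalAlgHom.comp_assoc, hg]

end FreeProd

section Convolution

variable {fp : ∀ A B : AlgC, FreeProd A B}
  {UP : ∀ A B : AlgC, (A.X →ₗ[ℂ] ℂ) → (B.X →ₗ[ℂ] ℂ) → ((fp A B).P.X →ₗ[ℂ] ℂ)}
  {B₀ : AlgC} {Λ : AlgC.Hom B₀ (fp B₀ B₀).P}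

variable (UP) in
def IsUniversal : Prop :=
  ∀ (A B A' B' : AlgC) (j₁ : AlgC.Hom A A') (j₂ : AlgC.Hom B B')
    (φ₁ : A'.X →ₗ[ℂ] ℂ) (φ₂ : B'.X →ₗ[ℂ] ℂ),
    UP A B (φ₁ ∘ₗ LinearMapClass.linearMap j₁) (φ₂ ∘ₗ LinearMapClass.linearMap j₂) =
      UP A' B' φ₁ φ₂ ∘ₗ LinearMapClass.linearMap (fpMap fp j₁ j₂)

variable (UP Λ) in
noncomputable def convolution (φ₁ φ₂ : B₀.X →ₗ[ℂ] ℂ) : B₀.X →ₗ[ℂ] ℂ :=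
  UP B₀ B₀ φ₁ φ₂ ∘ₗ LinearMapClass.linearMap Λ

theorem convolution_assoc (huniv : IsUniversal UP)
    (hassoc : ∀ (A B C : AlgC) (φ₁ : A.X →ₗ[ℂ] ℂ) (φ₂ : B.X →ₗ[ℂ] ℂ) (φ₃ : C.X →ₗ[ℂ] ℂ),
      UP (fp A B).P C (UP A B φ₁ φ₂) φ₃ =
        UP A (fp B C).P φ₁ (UP B C φ₂ φ₃) ∘ₗ LinearMapClass.linearMap (fpAssoc fp A B C))
    (hcoassoc : (fpAssoc fp B₀ B₀ B₀).comp ((fpMap fp Λ (NonUnitalAlgHom.id ℂ B₀.X)).comp Λ) =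
      (fpMap fp (NonUnitalAlgHom.id ℂ B₀.X) Λ).comp Λ)
    (f g h : B₀.X →ₗ[ℂ] ℂ) :
    convolution UP Λ (convolution UP Λ f g) h = convolution UP Λ f (convolution UP Λ g h) := by
  have hleft := huniv B₀ B₀ (fp B₀ B₀).P B₀ Λ (NonUnitalAlgHom.id ℂ B₀.X) (UP B₀ B₀ f g) h
  have hright := huniv B₀ B₀ B₀ (fp B₀ B₀).P (NonUnitalAlgHom.id ℂ B₀.X) Λ f (UP B₀ B₀ g h)
  rw [NonUnitalAlgHom.linearMap_id, LinearMap.comp_id] at hleft hright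
  calc convolution UP Λ (convolution UP Λ f g) h
      = UP (fp B₀ B₀).P B₀ (UP B₀ B₀ f g) h ∘ₗ
          LinearMapClass.linearMap ((fpMap fp Λ (NonUnitalAlgHom.id ℂ B₀.X)).comp Λ) := by
        rw [convolution, convolution, hleft]; rfl
    _ = UP B₀ (fp B₀ B₀).P f (UP B₀ B₀ g h) ∘ₗ LinearMapClass.linearMap
          ((fpAssoc fp B₀ B₀ B₀).comp ((fpMap fp Λ (NonUnitalAlgHom.id ℂ B₀.X)).comp Λ)) := by
        rw [hassoc]; rfl
    _ = convolution UP Λ f (convolution UP Λ g h) := by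
        rw [hcoassoc, convolution, convolution, hright]; rfl

theorem zero_convolution (huniv : IsUniversal UP)
    (hunit : ∀ (A : AlgC) (φ : A.X →ₗ[ℂ] ℂ),
      UP zeroAlg A 0 φ =
        φ ∘ₗ LinearMapClass.linearMap ((fp zeroAlg A).lift 0 (NonUnitalAlgHom.id ℂ A.X)))
    (hcounit : ((fp B₀ B₀).lift 0 (NonUnitalAlgHom.id ℂ B₀.X)).comp Λ = NonUnitalAlgHom.id ℂ B₀.X)
    (f : B₀.X →ₗ[ℂ] ℂ) :
    convolution UP Λ 0 f = f := by
  have h := huniv B₀ B₀ zeroAlg B₀ 0 (NonUnitalAlgHom.id ℂ B₀.X) 0 f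
  rw [LinearMap.zero_comp, NonUnitalAlgHom.linearMap_id, LinearMap.comp_id, hunit] at h
  calc convolution UP Λ 0 f
      = f ∘ₗ LinearMapClass.linearMap ((((fp zeroAlg B₀).lift 0 (NonUnitalAlgHom.id ℂ B₀.X)).comp
          (fpMap fp 0 (NonUnitalAlgHom.id ℂ B₀.X))).comp Λ) := by
        rw [convolution, h]; rfl
    _ = f := by
        rw [FreeProd.lift_comp_fpMap, NonUnitalAlgHom.zero_comp]
        exact congrArg (f ∘ₗ LinearMapClass.linearMap ·) hcounit

theorem convolution_zero (huniv : IsUniversal UP)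
    (hunit : ∀ (A : AlgC) (φ : A.X →ₗ[ℂ] ℂ),
      UP A zeroAlg φ 0 =
        φ ∘ₗ LinearMapClass.linearMap ((fp A zeroAlg).lift (NonUnitalAlgHom.id ℂ A.X) 0))
    (hcounit : ((fp B₀ B₀).lift (NonUnitalAlgHom.id ℂ B₀.X) 0).comp Λ = NonUnitalAlgHom.id ℂ B₀.X)
    (f : B₀.X →ₗ[ℂ] ℂ) :
    convolution UP Λ f 0 = f := by
  have h := huniv B₀ B₀ B₀ zeroAlg (NonUnitalAlgHom.id ℂ B₀.X) 0 f 0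
  rw [LinearMap.zero_comp, NonUnitalAlgHom.linearMap_id, LinearMap.comp_id, hunit] at h
  calc convolution UP Λ f 0
      = f ∘ₗ LinearMapClass.linearMap ((((fp B₀ zeroAlg).lift (NonUnitalAlgHom.id ℂ B₀.X) 0).comp
          (fpMap fp (NonUnitalAlgHom.id ℂ B₀.X) 0)).comp Λ) := by
        rw [convolution, h]; rfl
    _ = f := by
        rw [FreeProd.lift_comp_fpMap, NonUnitalAlgHom.zero_comp]
        exact congrArg (f ∘ₗ LinearMapClass.linearMap ·) hcounit

end Convolution

/-- Convolution on a dual semigroup: for an associative universal product `⊙`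
(satisfying universality, associativity and the unit condition) and a dual
semigroup `(B₀, Λ)` (coassociative with counit property), the convolution
`φ₁ ⋆ φ₂ := (φ₁ ⊙ φ₂) ∘ Λ` makes the linear functionals on `B₀` a monoid with
identity the zero functional. -/
theorem dual_semigroup_convolution_monoid (fp : ∀ A B : AlgC, FreeProd A B)
    (UP : ∀ A B : AlgC, (A.X →ₗ[ℂ] ℂ) → (B.X →ₗ[ℂ] ℂ) →
      ((fp A B).P.X →ₗ[ℂ] ℂ))
    (huniv : ∀ (A B A' B' : AlgC) (j₁ : AlgC.Hom A A') (j₂ : AlgC.Hom B B')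
        (φ₁ : A'.X →ₗ[ℂ] ℂ) (φ₂ : B'.X →ₗ[ℂ] ℂ),
      UP A B (φ₁ ∘ₗ (LinearMapClass.linearMap j₁)) (φ₂ ∘ₗ (LinearMapClass.linearMap j₂)) =
        (UP A' B' φ₁ φ₂) ∘ₗ LinearMapClass.linearMap (fpMap fp j₁ j₂))
    (hassoc : ∀ (A B C : AlgC) (φ₁ : A.X →ₗ[ℂ] ℂ) (φ₂ : B.X →ₗ[ℂ] ℂ)
        (φ₃ : C.X →ₗ[ℂ] ℂ),
      UP (fp A B).P C (UP A B φ₁ φ₂) φ₃ =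
        (UP A (fp B C).P φ₁ (UP B C φ₂ φ₃)) ∘ₗ LinearMapClass.linearMap (fpAssoc fp A B C))
    (hunit : ∀ (A : AlgC) (φ : A.X →ₗ[ℂ] ℂ),
      UP A zeroAlg φ 0 =
        φ ∘ₗ LinearMapClass.linearMap ((fp A zeroAlg).lift (NonUnitalAlgHom.id ℂ A.X) 0) ∧
      UP zeroAlg A 0 φ =
        φ ∘ₗ LinearMapClass.linearMap ((fp zeroAlg A).lift 0 (NonUnitalAlgHom.id ℂ A.X)))
    (B₀ : AlgC) (Λ : AlgC.Hom B₀ (fp B₀ B₀).P)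
    (hcoassoc : (fpAssoc fp B₀ B₀ B₀).comp
        ((fpMap fp Λ (NonUnitalAlgHom.id ℂ B₀.X)).comp Λ) =
      (fpMap fp (NonUnitalAlgHom.id ℂ B₀.X) Λ).comp Λ)
    (hcounit :
      ((fp B₀ B₀).lift (NonUnitalAlgHom.id ℂ B₀.X) 0).comp Λ =
        NonUnitalAlgHom.id ℂ B₀.X ∧
      ((fp B₀ B₀).lift 0 (NonUnitalAlgHom.id ℂ B₀.X)).comp Λ =
        NonUnitalAlgHom.id ℂ B₀.X) :
    (∀ f g h : B₀.X →ₗ[ℂ] ℂ,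
      (UP B₀ B₀ ((UP B₀ B₀ f g) ∘ₗ (LinearMapClass.linearMap Λ)) h) ∘ₗ (LinearMapClass.linearMap Λ) =
      (UP B₀ B₀ f ((UP B₀ B₀ g h) ∘ₗ (LinearMapClass.linearMap Λ))) ∘ₗ (LinearMapClass.linearMap Λ)) ∧
    (∀ f : B₀.X →ₗ[ℂ] ℂ,
      (UP B₀ B₀ (0 : B₀.X →ₗ[ℂ] ℂ) f) ∘ₗ (LinearMapClass.linearMap Λ) = f ∧
      (UP B₀ B₀ f (0 : B₀.X →ₗ[ℂ] ℂ)) ∘ₗ (LinearMapClass.linearMap Λ) = f) := by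
  exact ⟨convolution_assoc huniv hassoc hcoassoc,
    fun f => ⟨zero_convolution huniv (fun A φ => (hunit A φ).2) hcounit.2 f,
      convolution_zero huniv (fun A φ => (hunit A φ).1) hcounit.1 f⟩⟩
end
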